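/- arXiv:2207.13203 — 4 statements merged into one kernel-verified Lean document; each statement's English description precedes it below -/
import Mathlib

section
/- Let $p > 3$ be prime, $p = 12k + 1 + 4a + 6b$ with $a,b \in \{0,1\}$, $M = (p^2-1)/12 - k$. Consider the abelian group $G$ generated by symbols $V_0, V_1, \bar{Z}_0, \bar{Z}_1, \bar{E}, \bar{F}$ subject to the relations $V_0 = M\bar{Z}_0 - k\bar{Z}_1 - b\bar{E} - a\bar{F}$, $V_1 = -k\bar{Z}_0 + \bar{Z}_1 - \bar{E} - \bar{F}$, $b\bar{Z}_0 + \bar{Z}_1 - 2\bar{E} = 0$, and $a\bar{Z}_0 + \bar{Z}_1 - 3\bar{F} = 0$. Then $G$ is free abelian of rank $2$, with an isomorphism $G \cong \mathbb{Z}^2$ given by $\bar{Z}_0 \mapsto (1,0)$, $\bar{Z}_1 \mapsto (2a-3b, 6)$, $\bar{E} \mapsto (a-b, 3)$, $\bar{F} \mapsto (a-b, 2)$, $V_0 \mapsto (M - (2k+1)a + (3k+1)b, -6k-2a-3b)$, $V_1 \mapsto (-k-b, 1)$. -/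
open FreeAbelianGroup

/-- Free abelian group on the six generators `V₀, V₁, Z̄₀, Z̄₁, Ē, F̄`
(indexed by `0, 1, 2, 3, 4, 5`). -/
abbrev X4 : Type := FreeAbelianGroup (Fin 6)

/-- The relations defining the component group of the generalized Jacobian of `X₀(p²)`
with modulus the sum of all cusps. -/
def rels4 (k a b M : ℤ) : Set X4 :=
  { of 0 - (M • of 2 - k • of 3 - b • of 4 - a • of 5),
    of 1 - (-(k • of 2) + of 3 - of 4 - of 5),
    b • of 2 + of 3 - (2 : ℤ) • of 4,
    a • of 2 + of 3 - (3 : ℤ) • of 5 }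

/-!
The images of the generators in `ℤ²` respect the relations (for `V₀` because `a² - a = b² - b`,
which holds as `a, b ∈ {0, 1}`), so they define `φ : G → ℤ²`. The map `(x, y) ↦ x Z̄₀ + y (Ē - F̄)`
is a section of `φ`, and the relations show that every generator agrees with the image of its
`φ`-value under this section. Hence the kernel of the map from the free abelian group to `ℤ²`
is exactly the subgroup generated by the relations.
-/

section Presentation

variable {ι A : Type*} [AddCommGroup A] {S : Set (FreeAbelianGroup ι)}
  {φ : FreeAbelianGroup ι →+ A} {s : A →+ FreeAbelianGroup ι}

theorem FreeAbelianGroup.closure_eq_ker (hS : S ⊆ φ.ker)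
    (hgen : ∀ i, of i - s (φ (of i)) ∈ AddSubgroup.closure S) :
    AddSubgroup.closure S = φ.ker := by
  refine le_antisymm ((AddSubgroup.closure_le _).2 hS) fun x hx => ?_
  have hsub : ∀ y, y - s (φ y) ∈ AddSubgroup.closure S := fun y => by
    induction y using FreeAbelianGroup.induction_on with
    | zero => simp
    | of i => exact hgen i
    | neg i h => simpa [neg_add_eq_sub] using neg_mem h
    | add y z hy hz => simpa [add_sub_add_comm] using add_mem hy hz
  simpa [φ.mem_ker.1 hx] using hsub x

def FreeAbelianGroup.quotientClosureEquivOfRightInverse (hS : S ⊆ φ.ker)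
    (hs : Function.RightInverse s φ) (hgen : ∀ i, of i - s (φ (of i)) ∈ AddSubgroup.closure S) :
    (FreeAbelianGroup ι ⧸ AddSubgroup.closure S) ≃+ A :=
  (QuotientAddGroup.quotientAddEquivOfEq (closure_eq_ker hS hgen)).trans
    (QuotientAddGroup.quotientKerEquivOfRightInverse φ s hs)

@[simp]
theorem FreeAbelianGroup.quotientClosureEquivOfRightInverse_mk (hS : S ⊆ φ.ker)
    (hs : Function.RightInverse s φ) (hgen : ∀ i, of i - s (φ (of i)) ∈ AddSubgroup.closure S)
    (x : FreeAbelianGroup ι) :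
    quotientClosureEquivOfRightInverse hS hs hgen (QuotientAddGroup.mk x) = φ x :=
  rfl

end Presentation

theorem AddSubgroup.sum_zsmul_mem_closure {G : Type*} [AddCommGroup G] {S : Set G} {n : ℕ}
    {r : Fin n → G} (hr : ∀ j, r j ∈ S) (c : Fin n → ℤ) :
    ∑ j, c j • r j ∈ AddSubgroup.closure S :=
  sum_mem fun j _ => zsmul_mem (subset_closure (hr j)) (c j)

namespace X4

variable (k a b M : ℤ)

def relators : Fin 4 → X4 :=
  ![of 0 - (M • of 2 - k • of 3 - b • of 4 - a • of 5),
    of 1 - (-(k • of 2) + of 3 - of 4 - of 5),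
    b • of 2 + of 3 - (2 : ℤ) • of 4,
    a • of 2 + of 3 - (3 : ℤ) • of 5]

theorem rels4_eq_range_relators : rels4 k a b M = Set.range (relators k a b M) := by
  simp only [rels4, relators, Matrix.range_cons, Matrix.range_empty, Set.union_empty,
    Set.singleton_union]

def toProd : X4 →+ ℤ × ℤ :=
  lift ![(M - (2 * k + 1) * a + (3 * k + 1) * b, -6 * k - 2 * a - 3 * b), (-k - b, 1),
    (1, 0), (2 * a - 3 * b, 6), (a - b, 3), (a - b, 2)]

def ofProd : ℤ × ℤ →+ X4 :=
  (zmultiplesHom X4 (of 2)).coprod (zmultiplesHom X4 (of 4 - of 5))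

theorem toProd_ofProd : Function.RightInverse ofProd (toProd k a b M) := by
  rintro ⟨x, y⟩
  simp [ofProd, toProd, -zsmul_eq_mul]

variable {a b}

theorem rels4_subset_ker (hab : a * (a - 1) = b * (b - 1)) :
    rels4 k a b M ⊆ (toProd k a b M).ker := by
  rw [rels4_eq_range_relators, Set.range_subset_iff]
  intro j
  fin_cases j <;> simp [relators, toProd, Prod.ext_iff, -zsmul_eq_mul] <;> grind

theorem of_sub_ofProd_toProd_mem_closure (hab : a * (a - 1) = b * (b - 1)) (i : Fin 6) :
    of i - ofProd (toProd k a b M (of i)) ∈ AddSubgroup.closure (rels4 k a b M) := by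
  rw [rels4_eq_range_relators]
  -- row `i` writes `of i - ofProd (toProd (of i))` as a combination of the relators
  convert AddSubgroup.sum_zsmul_mem_closure (Set.mem_range_self (f := relators k a b M))
    (![![1, 0, -3 * k - a - b, 2 * k + a + b], ![0, 1, 1, 0], 0, ![0, 0, 3, -2], ![0, 0, 1, -1],
      ![0, 0, 1, -1]] i) using 1
  fin_cases i <;> simp [relators, toProd, ofProd, Fin.sum_univ_four, -zsmul_eq_mul] <;>
    match_scalars <;> grind

end X4

theorem statement_4_general (k a b M : ℤ)
    (ha : a = 0 ∨ a = 1) (hb : b = 0 ∨ b = 1) :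
    ∃ e : (X4 ⧸ AddSubgroup.closure (rels4 k a b M)) ≃+ ℤ × ℤ,
      e (QuotientAddGroup.mk (of 2)) = (1, 0) ∧
      e (QuotientAddGroup.mk (of 3)) = (2 * a - 3 * b, 6) ∧
      e (QuotientAddGroup.mk (of 4)) = (a - b, 3) ∧
      e (QuotientAddGroup.mk (of 5)) = (a - b, 2) ∧
      e (QuotientAddGroup.mk (of 0)) =
        (M - (2 * k + 1) * a + (3 * k + 1) * b, -6 * k - 2 * a - 3 * b) ∧
      e (QuotientAddGroup.mk (of 1)) = (-k - b, 1) := by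
  have hab : a * (a - 1) = b * (b - 1) := by
    rcases ha with rfl | rfl <;> rcases hb with rfl | rfl <;> norm_num
  refine ⟨quotientClosureEquivOfRightInverse (X4.rels4_subset_ker k M hab)
    (X4.toProd_ofProd k a b M) (X4.of_sub_ofProd_toProd_mem_closure k M hab), ?_⟩
  simp [X4.toProd]

/-- The group presented by generators `V₀, V₁, Z̄₀, Z̄₁, Ē, F̄` and the relations
coming from the intersection matrix of the minimal regular model of `X₀(p²)` is free
abelian of rank 2, via the explicit isomorphism sending `Z̄₀ ↦ (1,0)`,
`Z̄₁ ↦ (2a-3b,6)`, `Ē ↦ (a-b,3)`, `F̄ ↦ (a-b,2)`,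
`V₀ ↦ (M-(2k+1)a+(3k+1)b, -6k-2a-3b)`, `V₁ ↦ (-k-b,1)`. -/
theorem statement_4 (p k a b M : ℤ) (hp : Prime p) (h3 : 3 < p)
    (ha : a = 0 ∨ a = 1) (hb : b = 0 ∨ b = 1)
    (hpk : p = 12 * k + 1 + 4 * a + 6 * b)
    (hM : M = (p ^ 2 - 1) / 12 - k) :
    ∃ e : (X4 ⧸ AddSubgroup.closure (rels4 k a b M)) ≃+ ℤ × ℤ,
      e (QuotientAddGroup.mk (of 2)) = (1, 0) ∧
      e (QuotientAddGroup.mk (of 3)) = (2 * a - 3 * b, 6) ∧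
      e (QuotientAddGroup.mk (of 4)) = (a - b, 3) ∧
      e (QuotientAddGroup.mk (of 5)) = (a - b, 2) ∧
      e (QuotientAddGroup.mk (of 0)) =
        (M - (2 * k + 1) * a + (3 * k + 1) * b, -6 * k - 2 * a - 3 * b) ∧
      e (QuotientAddGroup.mk (of 1)) = (-k - b, 1) :=
  statement_4_general k a b M ha hb
end

section
/- Let $n \geq 1$, $\epsilon_2, \epsilon_3 \geq 0$ be integers with $6n - 3\epsilon_2 - 4\epsilon_3 > 0$. Let $G = \mathbb{Z} \oplus (\mathbb{Z}/2\mathbb{Z})^{\max(\epsilon_2-1,0)} \oplus (\mathbb{Z}/3\mathbb{Z})^{\max(\epsilon_3-1,0)}$ and let $v \in G$ be the element whose $\mathbb{Z}$-coordinate is $n$ if $\epsilon_2 = \epsilon_3 = 0$, $2n - \epsilon_2$ if $\epsilon_2 > 0, \epsilon_3 = 0$, $3n - 2\epsilon_3$ if $\epsilon_2 = 0, \epsilon_3 > 0$, and $6n - 3\epsilon_2 - 4\epsilon_3$ otherwise, and all of whose torsion coordinates equal $1$. Then $G/\langle v \rangle \cong \mathbb{Z}/P\mathbb{Z} \oplus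 (\mathbb{Z}/2\mathbb{Z})^{\max(\epsilon_2-2,0)} \oplus (\mathbb{Z}/3\mathbb{Z})^{\max(\epsilon_3-2,0)}$, where $P = 2^{\min(\epsilon_2,2)} 3^{\min(\epsilon_3,2)}(n - \epsilon_2/2 - 2\epsilon_3/3)$. -/
/-!
The shear `f ↦ (f 0, fun i => f i.succ - f 0)` identifies `(ℤ/k)^(e-1)` with `ℤ/k × (ℤ/k)^(e-2)`
and sends the all-ones vector to `(1, 0)` (for `e ≤ 1` the block is trivial and plays the role
of `ℤ/1`). After this change of coordinates `v = (z, (1, 0), (1, 0))`, so the factors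
`(ℤ/2)^(e₂-2) × (ℤ/3)^(e₃-2)` split off the quotient. By the Chinese remainder theorem the two
remaining cyclic factors merge into `ℤ/m` with `(1, 1) ↦ 1`, and `x ↦ [(x, 0)]` maps `ℤ` onto
`(ℤ × ℤ/m) ⧸ ⟨(z, 1)⟩` with kernel `m z ℤ`. A case check on `ε₂, ε₃` gives `P = m z`.
-/

/-- The ambient group `ℤ ⊕ (ℤ/2)^{max(ε₂-1,0)} ⊕ (ℤ/3)^{max(ε₃-1,0)}`. -/
abbrev G6 (e2 e3 : ℕ) : Type := ℤ × (Fin (e2 - 1) → ZMod 2) × (Fin (e3 - 1) → ZMod 3)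

/-- The `ℤ`-coordinate of the distinguished element `v`. -/
def zcoord (n e2 e3 : ℕ) : ℤ :=
  if e2 = 0 ∧ e3 = 0 then (n : ℤ)
  else if 0 < e2 ∧ e3 = 0 then 2 * n - e2
  else if e2 = 0 ∧ 0 < e3 then 3 * n - 2 * e3
  else 6 * n - 3 * e2 - 4 * e3

/-- The distinguished element `v`, with all torsion coordinates equal to `1`. -/
def v6 (n e2 e3 : ℕ) : G6 e2 e3 := (zcoord n e2 e3, fun _ => 1, fun _ => 1)

open AddSubgroup QuotientAddGroup

section

variable {A B : Type*} [AddCommGroup A] [AddCommGroup B]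

def quotientZMultiplesCongr (e : A ≃+ B) {a : A} {b : B} (h : e a = b) :
    A ⧸ zmultiples a ≃+ B ⧸ zmultiples b :=
  QuotientAddGroup.congr _ _ e (by rw [← h]; exact AddMonoidHom.map_zmultiples (e : A →+ B) a)

theorem zmultiples_prod_zero (a : A) :
    zmultiples ((a, 0) : A × B) = (zmultiples a).prod ⊥ := by
  ext ⟨x, y⟩
  simp [mem_zmultiples_iff, AddSubgroup.mem_prod, Prod.ext_iff, eq_comm]

noncomputable def quotientZMultiplesProdZeroEquiv (a : A) :
    (A × B) ⧸ zmultiples ((a, 0) : A × B) ≃+ (A ⧸ zmultiples a) × B :=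
  (quotientAddEquivOfEq (zmultiples_prod_zero a)).trans <|
    (prodAddEquiv _ _).trans ((AddEquiv.refl _).prodCongr quotientBot)

end

section IntProdZMod

variable (M : ℕ) (z : ℤ)

theorem mk_comp_inl_surjective :
    Function.Surjective
      ((mk' (zmultiples ((z, 1) : ℤ × ZMod M))).comp (AddMonoidHom.inl ℤ (ZMod M))) := by
  rintro ⟨x, y⟩
  obtain ⟨w, rfl⟩ := ZMod.intCast_surjective y
  exact ⟨x - w * z, eq_iff_sub_mem.2 ⟨-w, by simp⟩⟩

theorem ker_mk_comp_inl :
    ((mk' (zmultiples ((z, 1) : ℤ × ZMod M))).comp (AddMonoidHom.inl ℤ (ZMod M))).ker =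
      zmultiples ((M : ℤ) * z) := by
  ext x
  simp only [AddMonoidHom.mem_ker, AddMonoidHom.comp_apply, AddMonoidHom.inl_apply, mk'_apply,
    eq_zero_iff, mem_zmultiples_iff, Prod.ext_iff, Prod.smul_mk, smul_eq_mul, zsmul_eq_mul,
    mul_one, ZMod.intCast_zmod_eq_zero_iff_dvd]
  constructor
  · rintro ⟨k, rfl, j, rfl⟩
    exact ⟨j, by ring⟩
  · rintro ⟨j, rfl⟩
    exact ⟨M * j, by ring, dvd_mul_right _ _⟩

noncomputable def intProdZModQuotientEquiv :
    (ℤ × ZMod M) ⧸ zmultiples ((z, 1) : ℤ × ZMod M) ≃+ ZMod ((M : ℤ) * z).natAbs :=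
  (quotientKerEquivOfSurjective _ (mk_comp_inl_surjective M z)).symm.trans <|
    (quotientAddEquivOfEq (ker_mk_comp_inl M z)).trans (Int.quotientZMultiplesEquivZMod _)

end IntProdZMod

noncomputable def intProdZModProdQuotientEquiv {m₂ m₃ : ℕ} (hco : m₂.Coprime m₃) (z : ℤ)
    (A B : Type*) [AddCommGroup A] [AddCommGroup B] :
    (ℤ × (ZMod m₂ × A) × (ZMod m₃ × B)) ⧸ zmultiples (z, ((1 : ZMod m₂), (0 : A)), (1, (0 : B)))
      ≃+ ZMod ((m₂ * m₃ : ℕ) * z).natAbs × A × B :=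
  let crt : ZMod m₂ × ZMod m₃ ≃+ ZMod (m₂ * m₃) := (ZMod.chineseRemainder hco).symm.toAddEquiv
  let e : ℤ × (ZMod m₂ × A) × (ZMod m₃ × B) ≃+ (ℤ × ZMod (m₂ * m₃)) × (A × B) :=
    ((AddEquiv.refl ℤ).prodCongr ((AddEquiv.prodProdProdComm _ _ _ _).trans
      (crt.prodCongr (AddEquiv.refl _)))).trans AddEquiv.prodAssoc.symm
  have he : e (z, (1, 0), (1, 0)) = ((z, 1), 0) := by
    change ((z, (ZMod.chineseRemainder hco).symm 1), ((0 : A), (0 : B))) = _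
    rw [map_one]
    rfl
  (quotientZMultiplesCongr e he).trans <| (quotientZMultiplesProdZeroEquiv _).trans <|
    (intProdZModQuotientEquiv _ z).prodCongr (AddEquiv.refl _)

def Pi.finSuccShearAddEquiv (M : Type*) [AddCommGroup M] (a : ℕ) :
    (Fin (a + 1) → M) ≃+ M × (Fin a → M) where
  toFun f := (f 0, fun i => f i.succ - f 0)
  invFun c := Fin.cons c.1 (fun i => c.2 i + c.1)
  left_inv f := by
    funext i
    induction i using Fin.cases <;> simp
  right_inv c := by simp
  map_add' f g := by
    ext i
    · rfl
    · simp only [Pi.add_apply, Prod.snd_add]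
      abel

theorem Pi.finSuccShearAddEquiv_const {M : Type*} [AddCommGroup M] (a : ℕ) (c : M) :
    Pi.finSuccShearAddEquiv M a (fun _ => c) = (c, 0) := by
  simp [Pi.finSuccShearAddEquiv]
  rfl

def cyclicPart (k e : ℕ) : ℕ := if 2 ≤ e then k else 1

theorem exists_addEquiv_zmod_cyclicPart (k e : ℕ) :
    ∃ E : (Fin (e - 1) → ZMod k) ≃+ ZMod (cyclicPart k e) × (Fin (e - 2) → ZMod k),
      E (fun _ => 1) = (1, 0) := by
  by_cases he : 2 ≤ e
  · obtain ⟨a, rfl⟩ := Nat.exists_eq_add_of_le' he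
    rw [cyclicPart, if_pos he]
    exact ⟨Pi.finSuccShearAddEquiv _ a, Pi.finSuccShearAddEquiv_const a 1⟩
  · rw [cyclicPart, if_neg he, show e - 1 = 0 by omega, show e - 2 = 0 by omega]
    exact ⟨AddEquiv.uniqueProd.symm, Prod.ext (Subsingleton.elim _ _) (Subsingleton.elim _ _)⟩

theorem coprime_cyclicPart_two_three (e₂ e₃ : ℕ) :
    (cyclicPart 2 e₂).Coprime (cyclicPart 3 e₃) := by
  unfold cyclicPart
  split_ifs <;> norm_num

theorem eq_cyclicPart_mul_zcoord {n e2 e3 : ℕ} {P : ℤ}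
    (hP : 6 * P = 2 ^ (min e2 2) * 3 ^ (min e3 2) * (6 * (n : ℤ) - 3 * e2 - 4 * e3)) :
    P = (cyclicPart 2 e2 * cyclicPart 3 e3 : ℕ) * zcoord n e2 e3 := by
  obtain _ | _ | a2 := e2 <;> obtain _ | _ | a3 := e3 <;>
    simp [cyclicPart, zcoord] at hP ⊢ <;> omega

theorem statement_6_general (n e2 e3 : ℕ)
    (P : ℤ) (hP : 6 * P = 2 ^ (min e2 2) * 3 ^ (min e3 2) * (6 * (n : ℤ) - 3 * e2 - 4 * e3)) :
    Nonempty ((G6 e2 e3 ⧸ AddSubgroup.zmultiples (v6 n e2 e3)) ≃+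
      ZMod P.natAbs × (Fin (e2 - 2) → ZMod 2) × (Fin (e3 - 2) → ZMod 3)) := by
  obtain ⟨E₂, hE₂⟩ := exists_addEquiv_zmod_cyclicPart 2 e2
  obtain ⟨E₃, hE₃⟩ := exists_addEquiv_zmod_cyclicPart 3 e3
  have hv : (AddEquiv.refl ℤ).prodCongr (E₂.prodCongr E₃) (v6 n e2 e3) =
      (zcoord n e2 e3, (1, 0), (1, 0)) := by
    change (zcoord n e2 e3, E₂ (fun _ => 1), E₃ (fun _ => 1)) = _
    rw [hE₂, hE₃]
  obtain rfl := eq_cyclicPart_mul_zcoord hP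
  exact ⟨(quotientZMultiplesCongr _ hv).trans <|
    intProdZModProdQuotientEquiv (coprime_cyclicPart_two_three e2 e3) _ _ _⟩

/-- Mazur–Rapoport/Edixhoven: the quotient of
`ℤ ⊕ (ℤ/2)^{max(ε₂-1,0)} ⊕ (ℤ/3)^{max(ε₃-1,0)}` by the subgroup generated by `v` is
`ℤ/P ⊕ (ℤ/2)^{max(ε₂-2,0)} ⊕ (ℤ/3)^{max(ε₃-2,0)}`, where
`P = 2^{min(ε₂,2)} 3^{min(ε₃,2)} (n - ε₂/2 - 2ε₃/3)`. -/
theorem statement_6 (n e2 e3 : ℕ) (hn : 1 ≤ n)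
    (hpos : 0 < 6 * (n : ℤ) - 3 * e2 - 4 * e3)
    (P : ℤ) (hP : 6 * P = 2 ^ (min e2 2) * 3 ^ (min e3 2) * (6 * (n : ℤ) - 3 * e2 - 4 * e3)) :
    Nonempty ((G6 e2 e3 ⧸ AddSubgroup.zmultiples (v6 n e2 e3)) ≃+
      ZMod P.natAbs × (Fin (e2 - 2) → ZMod 2) × (Fin (e3 - 2) → ZMod 3)) :=
  statement_6_general n e2 e3 P hP
end

section
/- Let $A$, $B$, $C$, $I^{\mathrm{sing}}$, $I^{\mathrm{reg}}$ be finite sets with maps $\phi: B \to A$, $\psi: B \to C$, $\lambda: I^{\mathrm{sing}} \to A$, $\theta: I^{\mathrm{reg}} \to C$. Consider the $\mathbb{Z}$-linear maps $u: \mathbb{Z}[B] \oplus \mathbb{Z}[I^{\mathrm{sing}}] \oplus \mathbb{Z}[I^{\mathrm{reg}}] \to \mathbb{Z}[C] \oplus \mathbb{Z}[A]$ given by the matrix $\begin{pmatrix} \psi & 0 & \theta \\ \phi & \lambda & 0 \end{pmatrix}$, and $w: \mathbb{Z}[B] \oplus \mathbb{Z}[I^{\mathrm{sing}}] \oplus \mathbb{Z}[I^{\mathrm{reg}}]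 \to \mathbb{Z}[C] \oplus \mathbb{Z}[A] \oplus \mathbb{Z}$ given by $\begin{pmatrix} \psi & 0 & \theta \\ -\phi & \lambda & 0 \\ 0 & -\varepsilon & -\varepsilon \end{pmatrix}$, where $\varepsilon$ denotes the augmentation sending each basis element to $1$. Then the natural projection (forgetting the last $\mathbb{Z}$-coordinate and applying the sign change on the $\mathbb{Z}[A]$-component) induces an isomorphism $\ker(w) \cong \ker(u)$. -/
/-!
Pushforward along a map of finite sets preserves the augmentation. Hence the last row of `w`
is minus the sum of the augmentations of its first two rows, so `ker w` is cut out by those two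
rows alone; and after negating the `ℤ[I^sing]`-coordinate they are, up to the sign of the
`ℤ[A]`-row, the two rows of `u`.
-/

/-- The pushforward `ℤ[S] → ℤ[T]` induced by a map of finite sets `f : S → T`. -/
def indMap {S T : Type*} [Fintype S] [DecidableEq T] (f : S → T) :
    (S → ℤ) →ₗ[ℤ] (T → ℤ) :=
  Matrix.mulVecLin (Matrix.of fun t s => if f s = t then 1 else 0)

/-- The augmentation `ℤ[S] → ℤ`, sending each basis element to `1`. -/
def aug (S : Type*) [Fintype S] : (S → ℤ) →ₗ[ℤ] ℤ :=
  ∑ s : S, LinearMap.proj s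


section
variable {A B C Is Ir : Type*} [Fintype A] [Fintype B] [Fintype C] [Fintype Is] [Fintype Ir]
  [DecidableEq A] [DecidableEq C]
  (φ : B → A) (ψ : B → C) (lam : Is → A) (θ : Ir → C)

/-- first projection `ℤ[B] ⊕ ℤ[I^sing] ⊕ ℤ[I^reg] → ℤ[B]` -/
noncomputable def pB : ((B → ℤ) × ((Is → ℤ) × (Ir → ℤ))) →ₗ[ℤ] (B → ℤ) :=
  LinearMap.fst ℤ _ _

noncomputable def pS : ((B → ℤ) × ((Is → ℤ) × (Ir → ℤ))) →ₗ[ℤ] (Is → ℤ) :=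
  (LinearMap.fst ℤ (Is → ℤ) (Ir → ℤ)).comp (LinearMap.snd ℤ (B → ℤ) _)

noncomputable def pR : ((B → ℤ) × ((Is → ℤ) × (Ir → ℤ))) →ₗ[ℤ] (Ir → ℤ) :=
  (LinearMap.snd ℤ (Is → ℤ) (Ir → ℤ)).comp (LinearMap.snd ℤ (B → ℤ) _)

/-- The map `u` with matrix `[ψ 0 θ; φ λ 0]`. -/
noncomputable def uMap : ((B → ℤ) × ((Is → ℤ) × (Ir → ℤ))) →ₗ[ℤ] ((C → ℤ) × (A → ℤ)) :=
  LinearMap.prod ((indMap ψ).comp pB + (indMap θ).comp pR)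
    ((indMap φ).comp pB + (indMap lam).comp pS)

/-- The map `w` with matrix `[ψ 0 θ; -φ λ 0; 0 -ε -ε]`, the chain differential of the
extended graph. -/
noncomputable def wMap :
    ((B → ℤ) × ((Is → ℤ) × (Ir → ℤ))) →ₗ[ℤ] ((C → ℤ) × ((A → ℤ) × ℤ)) :=
  LinearMap.prod ((indMap ψ).comp pB + (indMap θ).comp pR)
    (LinearMap.prod (-(indMap φ).comp pB + (indMap lam).comp pS)
      (-(aug Is).comp pS - (aug Ir).comp pR))

/-- The sign-change automorphism of the common source corresponding to the projection
of targets `(c, a, t) ↦ (c, -a)` forgetting the last `ℤ`-coordinate. -/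
noncomputable def signChange :
    ((B → ℤ) × ((Is → ℤ) × (Ir → ℤ))) →ₗ[ℤ] ((B → ℤ) × ((Is → ℤ) × (Ir → ℤ))) :=
  LinearMap.prod (pB) (LinearMap.prod (-(pS)) (pR))

lemma aug_indMap {S T : Type*} [Fintype S] [Fintype T] [DecidableEq T] (f : S → T) (x : S → ℤ) :
    aug T (indMap f x) = aug S x := by
  simp only [aug, indMap, LinearMap.sum_apply, LinearMap.proj_apply,
    Matrix.mulVecLin_apply, Matrix.mulVec, dotProduct, Matrix.of_apply]
  rw [Finset.sum_comm]
  simp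

omit [Fintype B] [Fintype Is] [Fintype Ir] in
@[simp]
lemma signChange_apply (b : B → ℤ) (s : Is → ℤ) (r : Ir → ℤ) :
    signChange (b, s, r) = (b, -s, r) :=
  rfl

omit [Fintype B] [Fintype Is] [Fintype Ir] in
lemma signChange_involutive :
    Function.Involutive (signChange (B := B) (Is := Is) (Ir := Ir)) := by
  rintro ⟨b, s, r⟩
  simp

lemma wMap_snd_snd_eq_neg_aug (x : (B → ℤ) × ((Is → ℤ) × (Ir → ℤ))) :
    (wMap φ ψ lam θ x).2.2 = -(aug C (wMap φ ψ lam θ x).1 + aug A (wMap φ ψ lam θ x).2.1) := by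
  obtain ⟨b, s, r⟩ := x
  simp [wMap, pB, pS, pR, aug_indMap]
  ring

lemma mem_ker_wMap_iff (x : (B → ℤ) × ((Is → ℤ) × (Ir → ℤ))) :
    x ∈ LinearMap.ker (wMap φ ψ lam θ) ↔
      (wMap φ ψ lam θ x).1 = 0 ∧ (wMap φ ψ lam θ x).2.1 = 0 := by
  rw [LinearMap.mem_ker, Prod.ext_iff, Prod.ext_iff, wMap_snd_snd_eq_neg_aug]
  constructor
  · exact fun h => ⟨h.1, h.2.1⟩
  · rintro ⟨h₁, h₂⟩
    simp [h₁, h₂]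

omit [Fintype A] [Fintype C] in
lemma uMap_signChange (x : (B → ℤ) × ((Is → ℤ) × (Ir → ℤ))) :
    uMap φ ψ lam θ (signChange x) = ((wMap φ ψ lam θ x).1, -(wMap φ ψ lam θ x).2.1) := by
  obtain ⟨b, s, r⟩ := x
  simp [uMap, wMap, pB, pS, pR, add_comm]

/-- The natural comparison (forgetting the last `ℤ`-coordinate and changing signs)
induces an isomorphism `ker w ≅ ker u`: the homology of the extended graph
`Γ̃_{Y,Σ}` is the character group of the toric part of `Pic⁰_{(Y,Σ)/k}`. -/
theorem statement_8 :
    Submodule.map (signChange (B := B) (Is := Is) (Ir := Ir))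
        (LinearMap.ker (wMap φ ψ lam θ)) = LinearMap.ker (uMap φ ψ lam θ) := by
  have hσ := signChange_involutive (B := B) (Is := Is) (Ir := Ir)
  ext x
  rw [← SetLike.mem_coe, Submodule.map_coe,
    Set.mem_image_iff_of_inverse hσ.leftInverse hσ.rightInverse, SetLike.mem_coe,
    mem_ker_wMap_iff, LinearMap.mem_ker, ← hσ x, uMap_signChange, hσ x]
  simp [Prod.ext_iff]

end
end

section
/- Let $G_1, G_2, G_3$ be abelian groups fitting into an exact sequence $0 \to G_1 \to G_2 \to G_3 \to 0$, and let $H_i \subseteq G_i$ be subgroups such that the maps restrict to $H_1 \to H_2 \to H_3$, the sequence $0 \to H_1' \to H_2 \to H_3 \to 0$ is exact where $H_1' = G_1 \cap H_2$, each quotient $G_i/H_i$ is finitely generated, $H_1$ has finite index in $H_1'$, and $G_1/H_1$ is torsion-free. Then $H_1 = H_1'$, and consequently both sequences $0 \to H_1 \to H_2 \to H_3 \to 0$ and $0 \to G_1/H_1 \to G_2/H_2 \to G_3/H_3 \to 0$ are exact. -/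
/-- The index `[K : H ⊓ K]` multiplies every element of `K` into `H`. -/
theorem AddSubgroup.le_of_finiteIndex_addSubgroupOf {G : Type*} [AddCommGroup G]
    {H K : AddSubgroup G} [hfin : (H.addSubgroupOf K).FiniteIndex]
    (hroot : ∀ x ∈ K, ∀ n : ℕ, n ≠ 0 → n • x ∈ H → x ∈ H) : K ≤ H := by
  intro x hx
  have hmem : (H.addSubgroupOf K).index • (⟨x, hx⟩ : K) ∈ H.addSubgroupOf K :=
    (H.addSubgroupOf K).nsmul_index_mem _
  exact hroot x hx _ hfin.index_ne_zero (AddSubgroup.mem_addSubgroupOf.mp hmem)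

theorem QuotientAddGroup.mk'_mem_map_mk'_iff {G : Type*} [AddCommGroup G]
    (N H : AddSubgroup G) (g : G) :
    mk' N g ∈ H.map (mk' N) ↔ ∃ a ∈ N, ∃ h ∈ H, g = a + h := by
  rw [← AddSubgroup.mem_comap, comap_map_mk', AddSubgroup.mem_sup]
  simp only [eq_comm]

theorem statement_16_general {G : Type*} [AddCommGroup G] (A H1 H2 : AddSubgroup G)
    (H3 : AddSubgroup (G ⧸ A))
    (hH1A : H1 ≤ A) (hH1H2 : H1 ≤ H2)
    (hH3 : H3 = AddSubgroup.map (QuotientAddGroup.mk' A) H2)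
    (hfin : (H1.addSubgroupOf (A ⊓ H2)).FiniteIndex)
    (htf : ∀ a ∈ A, ∀ n : ℕ, n ≠ 0 → n • a ∈ H1 → a ∈ H1) :
    H1 = A ⊓ H2 ∧
    -- exactness of `0 → G₁/H₁ → G₂/H₂ → G₃/H₃ → 0`:
    (∀ a ∈ A, a ∈ H2 → a ∈ H1) ∧
    (∀ g : G, QuotientAddGroup.mk' A g ∈ H3 ↔ ∃ a ∈ A, ∃ h ∈ H2, g = a + h) := by
  have hle : A ⊓ H2 ≤ H1 :=
    AddSubgroup.le_of_finiteIndex_addSubgroupOf fun x hx => htf x hx.1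
  refine ⟨le_antisymm (le_inf hH1A hH1H2) hle, fun a ha hh => hle ⟨ha, hh⟩, ?_⟩
  subst hH3
  exact QuotientAddGroup.mk'_mem_map_mk'_iff A H2

/-- Group-theoretic content of Lemma 1.1(b): given `0 → A → G → G/A → 0` and
subgroups `H₁ ≤ A ∩ H₂`, `H₂ ≤ G`, `H₃ = image of H₂ in G/A` (exactness of
`0 → A ∩ H₂ → H₂ → H₃ → 0`), with all quotients `Gᵢ/Hᵢ` finitely generated, `H₁` of
finite index in `H₁' = A ∩ H₂`, and `A/H₁` torsion-free, one has `H₁ = A ∩ H₂`; and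
consequently the sequences of subgroups and of quotients are exact. -/
theorem statement_16 {G : Type*} [AddCommGroup G] (A H1 H2 : AddSubgroup G)
    (H3 : AddSubgroup (G ⧸ A))
    (hH1A : H1 ≤ A) (hH1H2 : H1 ≤ H2)
    (hH3 : H3 = AddSubgroup.map (QuotientAddGroup.mk' A) H2)
    (hfg1 : AddGroup.FG (A ⧸ H1.addSubgroupOf A))
    (hfg2 : AddGroup.FG (G ⧸ H2))
    (hfg3 : AddGroup.FG ((G ⧸ A) ⧸ H3))
    (hfin : (H1.addSubgroupOf (A ⊓ H2)).FiniteIndex)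
    (htf : ∀ a ∈ A, ∀ n : ℕ, n ≠ 0 → n • a ∈ H1 → a ∈ H1) :
    H1 = A ⊓ H2 ∧
    -- exactness of `0 → G₁/H₁ → G₂/H₂ → G₃/H₃ → 0`:
    (∀ a ∈ A, a ∈ H2 → a ∈ H1) ∧
    (∀ g : G, QuotientAddGroup.mk' A g ∈ H3 ↔ ∃ a ∈ A, ∃ h ∈ H2, g = a + h) :=
  statement_16_general A H1 H2 H3 hH1A hH1H2 hH3 hfin htf
end
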